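/- Let k ≥ 1 and let d₁, …, d_k ≥ 2 be integers, and let ℓ be an integer with ℓ ≥ max_s d_s + 1. Then there exists a constant c > 0 (depending only on ℓ and d₁, …, d_k) such that for all real numbers b₁ ≥ b₂ ≥ ⋯ ≥ b_k > 0, every L > 0 and every C ≥ 1, ∫_{ℝ^{d₁} × ⋯ × ℝ^{d_k}} (∏_{s=1}^k max(1, ‖x_s‖)^{−ℓ}) · ω(π L Σ_{j=1}^k b_j |x_j^{(1)}|) dx₁ ⋯ dx_k ≤ c (C^{−k} + C² (L b_k)⁻²), where x_j^{(1)} denotes the first coordinate of x_j ∈ ℝ^{d_j}. Consequently, there is a constant c′ > 0 such that the integral is at most c′ · max(1, L b_k)^{−2k/(k+2)} for all L > 0. -/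

import Mathlib

/-!
Split the domain according to whether every first coordinate satisfies `|x_s⁽¹⁾| ≤ δ = 1/C`.
On that product of slabs `ω ≤ 1`, and each factor contributes `O(δ)`: distributing the decay
`ℓ > d_s - 1` of the weight evenly over the other `d_s - 1` coordinates dominates it by a product
of integrable one-dimensional weights, while the slab has width `2δ`. This gives `C^{-k}`.
Off the slabs some `b_s |x_s⁽¹⁾| > b_k δ`, so `ω ≤ (π L b_k δ)⁻² ≤ C² (L b_k)⁻²`, against the
finite integral of the weight. Taking `C = max(1, L b_k)^{2/(k+2)}` balances the two terms.
-/

/-- The Fejér-type kernel `ω(t) = sin²(t)/t²` for `t ≠ 0`, `ω(0) = 1`. -/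
noncomputable def fejerKernel (t : ℝ) : ℝ :=
  if t = 0 then 1 else Real.sin t ^ 2 / t ^ 2

open MeasureTheory Real Module Finset

theorem fejerKernel_nonneg (t : ℝ) : 0 ≤ fejerKernel t := by
  unfold fejerKernel
  split_ifs <;> positivity

theorem fejerKernel_le_one (t : ℝ) : fejerKernel t ≤ 1 := by
  unfold fejerKernel
  split_ifs
  · exact le_rfl
  · exact (div_le_one (by positivity)).2 sin_sq_le_sq

theorem fejerKernel_le_inv_sq_of_le {a t : ℝ} (ha : 0 < a) (hat : a ≤ t) :
    fejerKernel t ≤ (a ^ 2)⁻¹ := by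
  have ht : 0 < t := ha.trans_le hat
  rw [fejerKernel, if_neg ht.ne', div_eq_mul_inv]
  calc sin t ^ 2 * (t ^ 2)⁻¹ ≤ 1 * (a ^ 2)⁻¹ := by
        gcongr
        exact sin_sq_le_one t
    _ = (a ^ 2)⁻¹ := one_mul _

theorem integrable_max_one_norm_rpow_neg {E : Type*} [NormedAddCommGroup E] [NormedSpace ℝ E]
    [FiniteDimensional ℝ E] [MeasurableSpace E] [BorelSpace E] {μ : Measure E}
    [μ.IsAddHaarMeasure] {r : ℝ} (hr : (finrank ℝ E : ℝ) < r) :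
    Integrable (fun x : E => (max 1 ‖x‖) ^ (-r)) μ := by
  have hr0 : 0 ≤ r := (Nat.cast_nonneg _).trans hr.le
  refine ((integrable_one_add_norm hr).const_mul (2 ^ r)).mono'
    (by fun_prop : Measurable fun x : E => (max 1 ‖x‖) ^ (-r)).aestronglyMeasurable
    (.of_forall fun x => ?_)
  have hmax : (1 + ‖x‖) / 2 ≤ max 1 ‖x‖ := by
    linarith [le_max_left 1 ‖x‖, le_max_right 1 ‖x‖]
  rw [norm_of_nonneg (by positivity)]
  calc (max 1 ‖x‖) ^ (-r) ≤ ((1 + ‖x‖) / 2) ^ (-r) :=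
        rpow_le_rpow_of_nonpos (by positivity) hmax (by linarith)
    _ = 2 ^ r * (1 + ‖x‖) ^ (-r) := by
        rw [div_rpow (by positivity) zero_le_two, rpow_neg zero_le_two, div_eq_mul_inv, inv_inv,
          mul_comm]

theorem max_one_norm_rpow_neg_le_prod {ι : Type*} [Fintype ι] (s : Finset ι) {p : ℝ}
    (hp : 0 ≤ p) (y : ι → ℝ) :
    (max 1 ‖y‖) ^ (-(p * #s)) ≤ ∏ i ∈ s, (max 1 ‖y i‖) ^ (-p) :=
  calc (max 1 ‖y‖) ^ (-(p * #s)) = ∏ _i ∈ s, (max 1 ‖y‖) ^ (-p) := by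
        rw [prod_const, ← rpow_natCast, ← rpow_mul (by positivity), neg_mul]
    _ ≤ ∏ i ∈ s, (max 1 ‖y i‖) ^ (-p) :=
        prod_le_prod (fun _ _ => by positivity) fun i _ => rpow_le_rpow_of_nonpos
          (by positivity) (max_le_max le_rfl (norm_le_pi_norm y i)) (neg_nonpos.2 hp)

theorem setIntegral_slab_le_of_le_prod {ι : Type*} [Fintype ι] [DecidableEq ι] (i₀ : ι)
    {G : (ι → ℝ) → ℝ} {h : ℝ → ℝ} (hG0 : ∀ y, 0 ≤ G y) (hh : Integrable h)
    (hG : ∀ y, G y ≤ ∏ i ∈ {i₀}ᶜ, h (y i)) {δ : ℝ} (hδ : 0 ≤ δ) :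
    ∫ y in {y : ι → ℝ | |y i₀| ≤ δ}, G y ≤ 2 * (∫ u, h u) ^ (Fintype.card ι - 1) * δ := by
  set f : ι → ℝ → ℝ := fun i => if i = i₀ then (Set.Icc (-δ) δ).indicator 1 else h
  have hf_compl : ∀ i ∈ ({i₀}ᶜ : Finset ι), f i = h := fun i hi => by
    simp [f, (by simpa using hi : i ≠ i₀)]
  have hf : ∀ i, Integrable (f i) := by
    intro i
    by_cases hi : i = i₀
    · simp only [f, hi, if_true]
      exact (integrable_indicator_iff measurableSet_Icc).2
        (integrableOn_const (C := (1 : ℝ)) measure_Icc_lt_top.ne)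
    · simpa [f, hi] using hh
  have hle : ∀ y : ι → ℝ, {y : ι → ℝ | |y i₀| ≤ δ}.indicator G y ≤ ∏ i, f i (y i) := by
    intro y
    rw [Fintype.prod_eq_mul_prod_compl i₀,
      prod_congr rfl fun i hi => congrFun (hf_compl i hi) (y i)]
    simp only [f, if_pos, Set.indicator_apply, Set.mem_ofPred_eq, Set.mem_Icc, ← abs_le]
    split_ifs
    · rw [Pi.one_apply, one_mul]
      exact hG y
    · rw [zero_mul]
  rw [← integral_indicator (measurableSet_le (by fun_prop) measurable_const)]
  calc _ ≤ ∫ y : ι → ℝ, ∏ i, f i (y i) :=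
        integral_mono_of_nonneg (.of_forall fun y => Set.indicator_nonneg (fun y _ => hG0 y) y)
          (Integrable.fintype_prod hf) (.of_forall hle)
    _ = ∏ i, ∫ u, f i u := integral_fintype_prod_volume_eq_prod f
    _ = 2 * (∫ u, h u) ^ (Fintype.card ι - 1) * δ := by
        rw [Fintype.prod_eq_mul_prod_compl i₀, prod_congr rfl fun i hi => by rw [hf_compl i hi]]
        simp only [f, if_pos, integral_indicator_one measurableSet_Icc,
          volume_real_Icc_of_le (neg_le_self hδ), prod_const, card_compl, card_singleton]
        ring

theorem exists_setIntegral_max_one_norm_rpow_neg_slab_le {ι : Type*} [Fintype ι] (i₀ : ι)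
    (hι : 2 ≤ Fintype.card ι) {r : ℝ} (hr : (Fintype.card ι : ℝ) - 1 < r) :
    ∃ K, ∀ δ, 0 ≤ δ → ∫ y in {y : ι → ℝ | |y i₀| ≤ δ}, (max 1 ‖y‖) ^ (-r) ≤ K * δ := by
  classical
  have hm : ((#({i₀}ᶜ : Finset ι) : ℕ) : ℝ) = Fintype.card ι - 1 := by
    rw [card_compl, card_singleton, Nat.cast_sub (by omega), Nat.cast_one]
  have hm0 : (0 : ℝ) < #({i₀}ᶜ : Finset ι) := by
    rw [hm, sub_pos]
    exact_mod_cast hι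
  set p := r / #({i₀}ᶜ : Finset ι)
  have hp : 1 < p := (one_lt_div hm0).2 (hm ▸ hr)
  have hpm : p * #({i₀}ᶜ : Finset ι) = r := div_mul_cancel₀ r hm0.ne'
  refine ⟨2 * (∫ u : ℝ, (max 1 ‖u‖) ^ (-p)) ^ (Fintype.card ι - 1), fun δ hδ =>
    setIntegral_slab_le_of_le_prod i₀ (fun y => by positivity)
      (integrable_max_one_norm_rpow_neg (by simpa using hp)) (fun y => ?_) hδ⟩
  rw [← hpm]
  exact max_one_norm_rpow_neg_le_prod _ (by positivity) y

theorem prod_mul_fejerKernel_le {ι : Type*} [Fintype ι] {G u b : ι → ℝ} {τ β δ : ℝ}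
    (hG : ∀ s, 0 ≤ G s) (hb : ∀ s, β ≤ b s) (hτ : 0 < τ) (hβ : 0 < β) (hδ : 0 < δ) :
    (∏ s, G s) * fejerKernel (τ * ∑ s, b s * |u s|)
      ≤ (∏ s, if |u s| ≤ δ then G s else 0) + ((τ * β * δ) ^ 2)⁻¹ * ∏ s, G s := by
  have hprod : 0 ≤ ∏ s, G s := prod_nonneg fun s _ => hG s
  by_cases hslab : ∀ s, |u s| ≤ δ
  · rw [prod_congr rfl fun s _ => if_pos (hslab s)]
    calc _ ≤ ∏ s, G s := mul_le_of_le_one_right hprod (fejerKernel_le_one _)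
      _ ≤ _ := le_add_of_nonneg_right (by positivity)
  · obtain ⟨s₀, hs₀⟩ : ∃ s, δ < |u s| := by simpa using hslab
    have hsum : τ * β * δ ≤ τ * ∑ s, b s * |u s| := by
      rw [mul_assoc]
      gcongr
      calc β * δ ≤ b s₀ * |u s₀| := mul_le_mul (hb s₀) hs₀.le hδ.le (hβ.le.trans (hb s₀))
        _ ≤ ∑ s, b s * |u s| := single_le_sum (fun s _ => mul_nonneg (hβ.le.trans (hb s))
            (abs_nonneg _)) (mem_univ s₀)
    calc _ ≤ (∏ s, G s) * ((τ * β * δ) ^ 2)⁻¹ :=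
          mul_le_mul_of_nonneg_left (fejerKernel_le_inv_sq_of_le (by positivity) hsum) hprod
      _ ≤ _ := by
          rw [mul_comm]
          exact le_add_of_nonneg_left (prod_nonneg fun s _ => by split_ifs <;> simp [hG])

section ProductSpace

variable {ι : Type*} [Fintype ι] {X : ι → Type*} [∀ s, MeasureSpace (X s)]
  [∀ s, SigmaFinite (volume : Measure (X s))] {g : ∀ s, X s → ℝ}

theorem integral_prod_mul_fejerKernel_le_prod_integral (hg0 : ∀ s y, 0 ≤ g s y)
    (hg : ∀ s, Integrable (g s)) (T : (∀ s, X s) → ℝ) :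
    ∫ x : ∀ s, X s, (∏ s, g s (x s)) * fejerKernel (T x) ≤ ∏ s, ∫ y, g s y := by
  have hprod : ∀ x : ∀ s, X s, 0 ≤ ∏ s, g s (x s) := fun x => prod_nonneg fun s _ => hg0 s _
  rw [← integral_fintype_prod_volume_eq_prod]
  exact integral_mono_of_nonneg (.of_forall fun x => mul_nonneg (hprod x) (fejerKernel_nonneg _))
    (Integrable.fintype_prod_dep hg)
    (.of_forall fun x => mul_le_of_le_one_right (hprod x) (fejerKernel_le_one _))

theorem integral_prod_mul_fejerKernel_le {φ : ∀ s, X s → ℝ} (hg0 : ∀ s y, 0 ≤ g s y)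
    (hg : ∀ s, Integrable (g s)) (hφ : ∀ s, Measurable (φ s)) {b : ι → ℝ} {τ β δ : ℝ}
    (hb : ∀ s, β ≤ b s) (hτ : 0 < τ) (hβ : 0 < β) (hδ : 0 < δ) :
    ∫ x : ∀ s, X s, (∏ s, g s (x s)) * fejerKernel (τ * ∑ s, b s * |φ s (x s)|)
      ≤ (∏ s, ∫ y in {y | |φ s y| ≤ δ}, g s y) + ((τ * β * δ) ^ 2)⁻¹ * ∏ s, ∫ y, g s y := by
  have hmeas : ∀ s, MeasurableSet {y | |φ s y| ≤ δ} := fun s =>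
    measurableSet_le (hφ s).abs measurable_const
  have hint_slab : Integrable fun x : ∀ s, X s => ∏ s, {y | |φ s y| ≤ δ}.indicator (g s) (x s) :=
    Integrable.fintype_prod_dep fun s => (hg s).indicator (hmeas s)
  have hint : Integrable fun x : ∀ s, X s => ((τ * β * δ) ^ 2)⁻¹ * ∏ s, g s (x s) :=
    (Integrable.fintype_prod_dep hg).const_mul _
  calc _ ≤ ∫ x : ∀ s, X s, (∏ s, {y | |φ s y| ≤ δ}.indicator (g s) (x s))
        + ((τ * β * δ) ^ 2)⁻¹ * ∏ s, g s (x s) :=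
        integral_mono_of_nonneg (.of_forall fun x => mul_nonneg
          (prod_nonneg fun s _ => hg0 s _) (fejerKernel_nonneg _)) (hint_slab.add hint)
          (.of_forall fun x => by simpa only [Set.indicator_apply, Set.mem_ofPred_eq] using
            prod_mul_fejerKernel_le (fun s => hg0 s (x s)) hb hτ hβ hδ)
    _ = _ := by
        rw [integral_add hint_slab hint, integral_const_mul, integral_fintype_prod_volume_eq_prod,
          integral_fintype_prod_volume_eq_prod]
        simp_rw [integral_indicator (hmeas _)]

theorem exists_integral_prod_mul_fejerKernel_le {φ : ∀ s, X s → ℝ} (hg0 : ∀ s y, 0 ≤ g s y)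
    (hg : ∀ s, Integrable (g s)) (hφ : ∀ s, Measurable (φ s))
    (hslab : ∀ s, ∃ K, ∀ δ, 0 ≤ δ → ∫ y in {y | |φ s y| ≤ δ}, g s y ≤ K * δ) :
    ∃ c, 0 < c ∧ (∀ T : (∀ s, X s) → ℝ, ∫ x, (∏ s, g s (x s)) * fejerKernel (T x) ≤ c) ∧
      ∀ (b : ι → ℝ) (β L C : ℝ), 0 < β → (∀ s, β ≤ b s) → 0 < L → 1 ≤ C →
        ∫ x : ∀ s, X s, (∏ s, g s (x s)) * fejerKernel (π * L * ∑ s, b s * |φ s (x s)|)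
          ≤ c * (C ^ (-(Fintype.card ι : ℤ)) + C ^ 2 * ((L * β) ^ 2)⁻¹) := by
  choose K hK using hslab
  set A := ∏ s, ∫ y, g s y
  have hA : 0 ≤ A := prod_nonneg fun s _ => integral_nonneg (hg0 s)
  set c := max 1 (max (∏ s, K s) A)
  have hKc : ∏ s, K s ≤ c := (le_max_left _ _).trans (le_max_right _ _)
  have hAc : A ≤ c := (le_max_right _ _).trans (le_max_right _ _)
  refine ⟨c, by positivity, fun T => ?_, fun b β L C hβ hb hL hC => ?_⟩
  · exact (integral_prod_mul_fejerKernel_le_prod_integral hg0 hg T).trans hAc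
  have hC0 : 0 < C := by linarith
  have hnear : (∏ s, ∫ y in {y | |φ s y| ≤ C⁻¹}, g s y) ≤ c * C ^ (-(Fintype.card ι : ℤ)) :=
    calc _ ≤ ∏ s, K s * C⁻¹ := prod_le_prod (fun s _ => integral_nonneg (hg0 s))
          fun s _ => hK s _ (by positivity)
      _ = (∏ s, K s) * C ^ (-(Fintype.card ι : ℤ)) := by
          rw [prod_mul_distrib, prod_const, card_univ, zpow_neg, zpow_natCast, inv_pow]
      _ ≤ c * C ^ (-(Fintype.card ι : ℤ)) := by gcongr
  have hfar : ((π * L * β * C⁻¹) ^ 2)⁻¹ * A ≤ c * (C ^ 2 * ((L * β) ^ 2)⁻¹) := by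
    have hπ : ((π * L * β * C⁻¹) ^ 2)⁻¹ ≤ C ^ 2 * ((L * β) ^ 2)⁻¹ := by
      rw [show ((π * L * β * C⁻¹) ^ 2)⁻¹ = C ^ 2 * ((L * β) ^ 2)⁻¹ / π ^ 2 by field_simp]
      exact div_le_self (by positivity) (by nlinarith [pi_gt_three])
    rw [mul_comm c]
    gcongr
  have hsplit := integral_prod_mul_fejerKernel_le hg0 hg hφ hb (τ := π * L) (by positivity) hβ
    (inv_pos.2 hC0)
  linarith

end ProductSpace

theorem le_two_mul_max_one_rpow_of_tradeoff (k : ℕ) {I c t : ℝ} (hc : 0 ≤ c) (ht : 0 < t)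
    (hI : I ≤ c) (hIC : ∀ C : ℝ, 1 ≤ C → I ≤ c * (C ^ (-(k : ℤ)) + C ^ 2 * (t ^ 2)⁻¹)) :
    I ≤ 2 * c * (max 1 t) ^ (-(2 * (k : ℝ) / (k + 2))) := by
  rcases le_or_gt t 1 with ht1 | ht1
  · rw [max_eq_left ht1, one_rpow]
    linarith
  · set C := t ^ (2 / ((k : ℝ) + 2))
    have hk : (k : ℝ) + 2 ≠ 0 := by positivity
    have hC_pow : C ^ (-(k : ℤ)) = t ^ (-(2 * (k : ℝ) / (k + 2))) := by
      rw [← rpow_intCast, ← rpow_mul ht.le]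
      congr 1
      push_cast
      field_simp
    have hC_sq : C ^ 2 * (t ^ 2)⁻¹ = t ^ (-(2 * (k : ℝ) / (k + 2))) := by
      rw [← rpow_natCast, ← rpow_mul ht.le, ← rpow_natCast t 2, ← rpow_neg ht.le,
        ← rpow_add ht]
      congr 1
      push_cast
      field_simp
      ring
    calc I ≤ c * (C ^ (-(k : ℤ)) + C ^ 2 * (t ^ 2)⁻¹) :=
          hIC C (one_le_rpow ht1.le (by positivity))
      _ = 2 * c * (max 1 t) ^ (-(2 * (k : ℝ) / (k + 2))) := by
          rw [hC_pow, hC_sq, max_eq_right ht1.le]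
          ring

/-- Multi-factor Fejér integral bound: for `d₁,…,d_k ≥ 2`, `ℓ ≥ max d_s + 1`,
and decreasing positive weights `b₁ ≥ ⋯ ≥ b_k > 0`, the integral
`∫ ∏_s max(1,‖x_s‖)^{-ℓ} · ω(πL Σ_j b_j |x_j⁽¹⁾|)` is `≤ c(C^{-k} + C²(Lb_k)⁻²)`
for all `C ≥ 1`, and consequently `≤ c'·max(1, Lb_k)^{-2k/(k+2)}`. -/
theorem multi_fejer_integral_bound (k : ℕ) (hk : 1 ≤ k) (d : Fin k → ℕ)
    (hd : ∀ s, 2 ≤ d s) (ℓ : ℕ) (hℓ : ∀ s, d s + 1 ≤ ℓ) :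
    (∃ c : ℝ, 0 < c ∧ ∀ b : Fin k → ℝ, (∀ s, 0 < b s) →
      (∀ i j : Fin k, i ≤ j → b j ≤ b i) →
      ∀ L : ℝ, 0 < L → ∀ C : ℝ, 1 ≤ C →
        (∫ x : (s : Fin k) → (Fin (d s) → ℝ),
            (∏ s, (max 1 ‖x s‖) ^ (-(ℓ : ℤ))) *
              fejerKernel (Real.pi * L *
                ∑ j, b j * |x j ⟨0, by have := hd j; omega⟩|))
          ≤ c * (C ^ (-(k : ℤ)) + C ^ 2 * ((L * b ⟨k - 1, by omega⟩) ^ 2)⁻¹)) ∧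
    (∃ c' : ℝ, 0 < c' ∧ ∀ b : Fin k → ℝ, (∀ s, 0 < b s) →
      (∀ i j : Fin k, i ≤ j → b j ≤ b i) →
      ∀ L : ℝ, 0 < L →
        (∫ x : (s : Fin k) → (Fin (d s) → ℝ),
            (∏ s, (max 1 ‖x s‖) ^ (-(ℓ : ℤ))) *
              fejerKernel (Real.pi * L *
                ∑ j, b j * |x j ⟨0, by have := hd j; omega⟩|))
          ≤ c' * (max 1 (L * b ⟨k - 1, by omega⟩)) ^
              (-(2 * (k : ℝ) / ((k : ℝ) + 2)))) := by
  have hweight : ∀ s (y : Fin (d s) → ℝ), (max 1 ‖y‖) ^ (-(ℓ : ℤ)) = (max 1 ‖y‖) ^ (-(ℓ : ℝ)) :=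
    fun s y => by rw [← rpow_intCast]; push_cast; rfl
  simp_rw [hweight]
  have hint : ∀ s, Integrable fun y : Fin (d s) → ℝ => (max 1 ‖y‖) ^ (-(ℓ : ℝ)) := fun s =>
    integrable_max_one_norm_rpow_neg (by rw [finrank_fin_fun]; exact_mod_cast hℓ s)
  obtain ⟨c, hc, hbound, hsplit⟩ := exists_integral_prod_mul_fejerKernel_le
    (φ := fun s y => y ⟨0, by have := hd s; omega⟩) (fun s y => by positivity) hint
    (fun s => measurable_pi_apply _) fun s => exists_setIntegral_max_one_norm_rpow_neg_slab_le
      (⟨0, by have := hd s; omega⟩ : Fin (d s)) (by simpa using hd s) (r := ℓ)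
      (by rw [Fintype.card_fin, sub_lt_iff_lt_add]; exact_mod_cast (by have := hℓ s; omega))
  have hlast : ∀ b : Fin k → ℝ, (∀ i j : Fin k, i ≤ j → b j ≤ b i) →
      ∀ s, b ⟨k - 1, by omega⟩ ≤ b s :=
    fun b hmono s => hmono s _ (Fin.le_iff_val_le_val.2 (Nat.le_sub_one_of_lt s.isLt))
  refine ⟨⟨c, hc, fun b hb hmono L hL C hC => ?_⟩, 2 * c, by positivity, fun b hb hmono L hL => ?_⟩
  · simpa only [Fintype.card_fin] using hsplit b _ L C (hb _) (hlast b hmono) hL hC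
  · exact le_two_mul_max_one_rpow_of_tradeoff k hc.le (mul_pos hL (hb _)) (hbound _)
      fun C hC => by simpa only [Fintype.card_fin] using hsplit b _ L C (hb _) (hlast b hmono) hL hC
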